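/- arXiv:0704.0640 — 7 statements merged into one kernel-verified Lean document; each statement's English description precedes it below -/
import Mathlib

section
/- The triple {X₁, X₂, X₃} of subsets of Z₄₇, where X₁ = {2,3,5,6,7,9,10,11,12,13,14,17,18,19,20,21,22,25,27,30,31,33,35,37,38,39,40,42,43,44}, X₂ = {1,3,6,7,8,11,13,14,15,19,20,21,24,27,30,33,39,41,43,44,45,46}, and X₃ = {3,6,8,10,11,12,14,20,21,23,24,25,26,27,30,31,32,34,35,41,42,45}, forms a 3-(47; 30,22,22; 39) supplementary difference set: |X₁| = 30, |X₂| = |X₃| = 22, and for every nonzero r ∈ Z₄₇ the total number of ordered pairs (i,j) with i,j ∈ X_k and i − j = r, summed over k = 1,2,3, equals 39. -/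
/-- The number of ordered pairs `(i, j)` with `i, j ∈ X` and `i - j = r`. -/
def diffCount {n : ℕ} (X : Finset (ZMod n)) (r : ZMod n) : ℕ :=
  ((X ×ˢ X).filter (fun p => p.1 - p.2 = r)).card

set_option maxHeartbeats 4000000 in
theorem stmt_0 :
    let X₁ : Finset (ZMod 47) :=
      {2,3,5,6,7,9,10,11,12,13,14,17,18,19,20,21,22,25,27,30,
       31,33,35,37,38,39,40,42,43,44}
    let X₂ : Finset (ZMod 47) :=
      {1,3,6,7,8,11,13,14,15,19,20,21,24,27,30,33,39,41,43,44,45,46}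
    let X₃ : Finset (ZMod 47) :=
      {3,6,8,10,11,12,14,20,21,23,24,25,26,27,30,31,32,34,35,41,42,45}
    X₁.card = 30 ∧ X₂.card = 22 ∧ X₃.card = 22 ∧
      ∀ r : ZMod 47, r ≠ 0 →
        diffCount X₁ r + diffCount X₂ r + diffCount X₃ r = 39 := by
  decide
end

section
/- The triple {Q₁, Q₂, Q₃} of subsets of Z₄₇, where Q₁ = {4,5,6,8,11,12,15,20,21,23,25,26,28,29,30,31,32,36,39,41,43}, Q₂ = {1,2,5,7,13,14,21,22,24,26,31,32,35,36,37,39,40,42,46}, and Q₃ = {1,2,3,4,5,9,12,18,20,21,24,25,32,34,38,39,43,44,46}, forms a 3-(47; 21,19,19; 24) supplementary difference set: |Q₁| = 21, |Q₂| = |Q₃| = 19, and for every nonzero r ∈ Z₄₇ the total number of ordered pairs (i,j) with i,j ∈ Q_k and i − j = r, summed over k = 1,2,3, equals 24. -/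
theorem stmt_4 :
    let Q₁ : Finset (ZMod 47) :=
      {4,5,6,8,11,12,15,20,21,23,25,26,28,29,30,31,32,36,39,41,43}
    let Q₂ : Finset (ZMod 47) :=
      {1,2,5,7,13,14,21,22,24,26,31,32,35,36,37,39,40,42,46}
    let Q₃ : Finset (ZMod 47) :=
      {1,2,3,4,5,9,12,18,20,21,24,25,32,34,38,39,43,44,46}
    Q₁.card = 21 ∧ Q₂.card = 19 ∧ Q₃.card = 19 ∧
      ∀ r : ZMod 47, r ≠ 0 →
        diffCount Q₁ r + diffCount Q₂ r + diffCount Q₃ r = 24 := by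
  refine ⟨by decide, by decide, by decide, by decide⟩
end

section
/- Let n ≥ 1 and let X₀, X₁, X₂, X₃ be subsets of Z_n forming a 4-(n; n₀,n₁,n₂,n₃; λ) supplementary difference set with λ = n₀ + n₁ + n₂ + n₃ − n. For k = 0,1,2,3 let A_k be the n×n circulant integer matrix whose (i,j) entry equals −1 if j − i ∈ X_k and +1 otherwise. Then A₀A₀ᵀ + A₁A₁ᵀ + A₂A₂ᵀ + A₃A₃ᵀ = 4n·I_n. -/
open Matrix

lemma diffCount_eq {n : ℕ} (X : Finset (ZMod n)) (r : ZMod n) :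
    diffCount X r = (X.filter (fun a => a - r ∈ X)).card := by
  unfold diffCount
  apply Finset.card_bij (fun p _ => p.1)
  · intro p hp
    simp only [Finset.mem_filter, Finset.mem_product] at hp ⊢
    obtain ⟨⟨h1, h2⟩, h3⟩ := hp
    exact ⟨h1, by rw [show p.1 - r = p.2 by rw [← h3]; ring]; exact h2⟩
  · intro p hp q hq h
    simp only [Finset.mem_filter, Finset.mem_product] at hp hq
    have h2 : p.2 = q.2 := by
      have := hp.2.trans hq.2.symm
      rw [h] at this
      exact sub_right_injective this
    exact Prod.ext h h2
  · intro a ha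
    simp only [Finset.mem_filter] at ha
    exact ⟨(a, a - r), by simp [Finset.mem_filter, ha.1, ha.2], rfl⟩

lemma diffCount_zero {n : ℕ} (X : Finset (ZMod n)) : diffCount X 0 = X.card := by
  rw [diffCount_eq]
  simp [Finset.filter_true_of_mem]

lemma sum_chi {n : ℕ} [NeZero n] (X : Finset (ZMod n)) (r : ZMod n) :
    ∑ a : ZMod n, (if a ∈ X then (-1:ℤ) else 1) * (if a - r ∈ X then (-1:ℤ) else 1)
      = (n : ℤ) - 4 * X.card + 4 * diffCount X r := by
  have step : ∀ a : ZMod n,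
      (if a ∈ X then (-1:ℤ) else 1) * (if a - r ∈ X then (-1:ℤ) else 1)
      = 1 - 2 * (if a ∈ X then (1:ℤ) else 0) - 2 * (if a - r ∈ X then (1:ℤ) else 0)
        + 4 * (if a ∈ X ∧ a - r ∈ X then (1:ℤ) else 0) := by
    intro a; split_ifs with h1 h2 h3 h3 <;> simp_all
  simp only [step]
  rw [Finset.sum_add_distrib, Finset.sum_sub_distrib, Finset.sum_sub_distrib,
    ← Finset.mul_sum, ← Finset.mul_sum, ← Finset.mul_sum]
  have e1 : ∑ a : ZMod n, (if a ∈ X then (1:ℤ) else 0) = X.card := by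
    rw [Finset.sum_ite_mem]; simp
  have e2 : ∑ a : ZMod n, (if a - r ∈ X then (1:ℤ) else 0) = X.card := by
    rw [← e1]
    exact Fintype.sum_equiv (Equiv.subRight r) _ _ (fun a => rfl)
  have e3 : ∑ a : ZMod n, (if a ∈ X ∧ a - r ∈ X then (1:ℤ) else 0) = diffCount X r := by
    rw [Finset.sum_boole, diffCount_eq]
    norm_cast
    congr 1
    ext a
    simp [Finset.mem_filter]
  rw [e1, e2, e3]
  simp [Finset.card_univ, ZMod.card]
  ring

theorem stmt_6 (n : ℕ) (hn : 1 ≤ n) (X : Fin 4 → Finset (ZMod n)) (lam : ℕ)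
    (hlam : lam + n = ∑ k : Fin 4, (X k).card)
    (hSDS : ∀ r : ZMod n, r ≠ 0 → ∑ k : Fin 4, diffCount (X k) r = lam)
    (A : Fin 4 → Matrix (Fin n) (Fin n) ℤ)
    (hA : ∀ (k : Fin 4) (i j : Fin n),
      A k i j = if (((j : ℕ) : ZMod n) - ((i : ℕ) : ZMod n)) ∈ X k then -1 else 1) :
    ∑ k : Fin 4, A k * (A k)ᵀ = ((4 * n : ℕ) : ℤ) • 1 := by
  haveI : NeZero n := ⟨by omega⟩
  have hbij : Function.Bijective (fun l : Fin n => ((l : ℕ) : ZMod n)) := by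
    constructor
    · intro a b h
      have := congrArg ZMod.val h
      rwa [ZMod.val_cast_of_lt a.isLt, ZMod.val_cast_of_lt b.isLt, Fin.val_inj] at this
    · intro x
      exact ⟨⟨x.val, x.val_lt⟩, by simp [ZMod.natCast_val, ZMod.cast_id]⟩
  have key : ∀ (k : Fin 4) (i j : Fin n),
      ∑ l : Fin n, A k i l * A k j l
        = (n : ℤ) - 4 * (X k).card
          + 4 * diffCount (X k) (((j : ℕ) : ZMod n) - ((i : ℕ) : ZMod n)) := by
    intro k i j
    set i' : ZMod n := ((i : ℕ) : ZMod n)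
    set j' : ZMod n := ((j : ℕ) : ZMod n)
    have h1 : ∑ l : Fin n, A k i l * A k j l
        = ∑ x : ZMod n, (if x - i' ∈ X k then (-1:ℤ) else 1)
            * (if x - j' ∈ X k then (-1:ℤ) else 1) := by
      apply Fintype.sum_bijective _ hbij
      intro l
      rw [hA, hA]
    rw [h1, ← sum_chi (X k) (j' - i')]
    apply Fintype.sum_equiv (Equiv.subRight i')
    intro x
    simp only [Equiv.subRight_apply]
    congr 2
    ring
  ext i j
  simp only [Matrix.sum_apply, Matrix.mul_apply, Matrix.transpose_apply, Matrix.smul_apply,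
    Matrix.one_apply, smul_eq_mul]
  simp only [key]
  by_cases hij : i = j
  · subst hij
    simp [diffCount_zero]
  · have hne : ((j : ℕ) : ZMod n) - ((i : ℕ) : ZMod n) ≠ 0 := by
      intro h
      apply hij
      have := sub_eq_zero.mp h
      exact (hbij.1 this).symm
    rw [Finset.sum_add_distrib, Finset.sum_sub_distrib, ← Finset.mul_sum, ← Finset.mul_sum]
    have h4 : (∑ k : Fin 4, (diffCount (X k) (((j : ℕ) : ZMod n) - ((i : ℕ) : ZMod n)) : ℤ))
        = (lam : ℤ) := by exact_mod_cast congrArg Nat.cast (hSDS _ hne)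
    have h5 : (∑ k : Fin 4, ((X k).card : ℤ)) = (lam : ℤ) + n := by
      have := congrArg (Nat.cast (R := ℤ)) hlam
      push_cast at this
      linarith
    rw [h4, h5]
    simp [Matrix.one_apply, hij]
    ring
end

section
/- Let n ≥ 1 and let A₀, A₁, A₂, A₃ be n×n circulant matrices with entries in {+1, −1} satisfying A₀A₀ᵀ + A₁A₁ᵀ + A₂A₂ᵀ + A₃A₃ᵀ = 4n·I_n. Let R be the n×n back-diagonal permutation matrix (R_{ij} = 1 iff i + j = n − 1). Then the 4n×4n Goethals–Seidel block matrix A = [[A₀, A₁R, A₂R, A₃R], [−A₁R, A₀, −A₃ᵀR, A₂ᵀR], [−A₂R, A₃ᵀR, A₀, −A₁ᵀR], [−A₃R, −A₂ᵀR, A₁ᵀR, A₀]] is a Hadamard matrix of order 4n, i.e., all entries of A are ±1 and A·Aᵀ = 4n·I_{4n}. -/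
open Matrix

section GS
variable {n : ℕ} {R : Matrix (Fin n) (Fin n) ℤ}
  (hR : ∀ i j : Fin n, R i j = if (i : ℕ) + (j : ℕ) = n - 1 then 1 else 0)
include hR

lemma gs_mulR (M : Matrix (Fin n) (Fin n) ℤ) (i j : Fin n) :
    (M * R) i j = M i j.rev := by
  rw [Matrix.mul_apply, Finset.sum_eq_single j.rev]
  · rw [hR]
    have := j.isLt
    have := Fin.val_rev j
    rw [if_pos (by omega), mul_one]
  · intro k _ hk
    rw [hR, if_neg, mul_zero]
    intro h
    apply hk
    apply Fin.ext
    have := j.isLt; have := k.isLt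
    rw [Fin.val_rev]; omega
  · intro h; exact absurd (Finset.mem_univ _) h

lemma gs_Rmul (M : Matrix (Fin n) (Fin n) ℤ) (i j : Fin n) :
    (R * M) i j = M i.rev j := by
  rw [Matrix.mul_apply, Finset.sum_eq_single i.rev]
  · rw [hR]
    have := i.isLt
    have := Fin.val_rev i
    rw [if_pos (by omega), one_mul]
  · intro k _ hk
    rw [hR, if_neg, zero_mul]
    intro h
    apply hk
    apply Fin.ext
    have := i.isLt; have := k.isLt
    rw [Fin.val_rev]; omega
  · intro h; exact absurd (Finset.mem_univ _) h

lemma gs_RR : R * R = 1 := by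
  ext i j
  rw [gs_mulR hR, hR, Matrix.one_apply]
  have := i.isLt; have := j.isLt
  have := Fin.val_rev j
  by_cases h : i = j
  · subst h; rw [if_pos (by omega), if_pos rfl]
  · rw [if_neg, if_neg h]
    intro hc
    exact h (Fin.ext (by omega))

lemma gs_Rsymm : Rᵀ = R := by
  ext i j
  rw [Matrix.transpose_apply, hR, hR, Nat.add_comm]

lemma gs_circR (v : Fin n → ℤ) : Matrix.circulant v * R = R * (Matrix.circulant v)ᵀ := by
  ext i j
  rw [gs_mulR hR, gs_Rmul hR, Matrix.circulant_apply, Matrix.transpose_apply,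
    Matrix.circulant_apply]
  congr 1
  apply Fin.ext
  have := i.isLt; have := j.isLt
  simp only [Fin.sub_def, Fin.val_rev]
  congr 1
  omega

lemma gs_RC (v : Fin n → ℤ) :
    R * Matrix.circulant v = Matrix.circulant (fun i => v (-i)) * R := by
  have h := gs_circR hR (fun i => v (-i))
  rw [Fin.transpose_circulant] at h
  simp only [neg_neg] at h
  exact h.symm

lemma gs_RC2 (v : Fin n → ℤ) (M : Matrix (Fin n) (Fin n) ℤ) :
    R * (Matrix.circulant v * M) = Matrix.circulant (fun i => v (-i)) * (R * M) := by
  rw [← mul_assoc, gs_RC hR, mul_assoc]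

lemma gs_RR2 (M : Matrix (Fin n) (Fin n) ℤ) : R * (R * M) = M := by
  rw [← mul_assoc, gs_RR hR, one_mul]

end GS

theorem stmt_7 (n : ℕ) (hn : 1 ≤ n)
    (A₀ A₁ A₂ A₃ : Matrix (Fin n) (Fin n) ℤ)
    (hc₀ : ∃ v, A₀ = Matrix.circulant v) (hc₁ : ∃ v, A₁ = Matrix.circulant v)
    (hc₂ : ∃ v, A₂ = Matrix.circulant v) (hc₃ : ∃ v, A₃ = Matrix.circulant v)
    (hpm : ∀ B ∈ [A₀, A₁, A₂, A₃], ∀ i j, B i j = 1 ∨ B i j = -1)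
    (hsum : A₀ * A₀ᵀ + A₁ * A₁ᵀ + A₂ * A₂ᵀ + A₃ * A₃ᵀ = ((4 * n : ℕ) : ℤ) • 1)
    (R : Matrix (Fin n) (Fin n) ℤ)
    (hR : ∀ i j : Fin n, R i j = if (i : ℕ) + (j : ℕ) = n - 1 then 1 else 0)
    (A : Matrix ((Fin n ⊕ Fin n) ⊕ (Fin n ⊕ Fin n)) ((Fin n ⊕ Fin n) ⊕ (Fin n ⊕ Fin n)) ℤ)
    (hA : A = Matrix.fromBlocks
      (Matrix.fromBlocks A₀ (A₁ * R) (-(A₁ * R)) A₀)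
      (Matrix.fromBlocks (A₂ * R) (A₃ * R) (-(A₃ᵀ * R)) (A₂ᵀ * R))
      (Matrix.fromBlocks (-(A₂ * R)) (A₃ᵀ * R) (-(A₃ * R)) (-(A₂ᵀ * R)))
      (Matrix.fromBlocks A₀ (-(A₁ᵀ * R)) (A₁ᵀ * R) A₀)) :
    (∀ i j, A i j = 1 ∨ A i j = -1) ∧ A * Aᵀ = ((4 * n : ℕ) : ℤ) • 1 := by
  obtain ⟨v₀, rfl⟩ := hc₀
  obtain ⟨v₁, rfl⟩ := hc₁
  obtain ⟨v₂, rfl⟩ := hc₂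
  obtain ⟨v₃, rfl⟩ := hc₃
  subst hA
  have h₀ := hpm _ (by simp : Matrix.circulant v₀ ∈ _)
  have h₁ := hpm _ (by simp : Matrix.circulant v₁ ∈ _)
  have h₂ := hpm _ (by simp : Matrix.circulant v₂ ∈ _)
  have h₃ := hpm _ (by simp : Matrix.circulant v₃ ∈ _)
  have n₀ : ∀ a b, -(Matrix.circulant v₀ a b) = 1 ∨ -(Matrix.circulant v₀ a b) = -1 :=
    fun a b => by have := h₀ a b; omega
  have n₁ : ∀ a b, -(Matrix.circulant v₁ a b) = 1 ∨ -(Matrix.circulant v₁ a b) = -1 :=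
    fun a b => by have := h₁ a b; omega
  have n₂ : ∀ a b, -(Matrix.circulant v₂ a b) = 1 ∨ -(Matrix.circulant v₂ a b) = -1 :=
    fun a b => by have := h₂ a b; omega
  have n₃ : ∀ a b, -(Matrix.circulant v₃ a b) = 1 ∨ -(Matrix.circulant v₃ a b) = -1 :=
    fun a b => by have := h₃ a b; omega
  constructor
  · intro i j
    obtain (i | i) | (i | i) := i <;> obtain (j | j) | (j | j) := j <;>
      simp only [Matrix.fromBlocks_apply₁₁, Matrix.fromBlocks_apply₁₂,
        Matrix.fromBlocks_apply₂₁, Matrix.fromBlocks_apply₂₂, Matrix.neg_apply,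
        gs_mulR hR, Matrix.transpose_apply] <;>
      first
        | exact h₀ _ _ | exact h₁ _ _ | exact h₂ _ _ | exact h₃ _ _
        | exact n₀ _ _ | exact n₁ _ _ | exact n₂ _ _ | exact n₃ _ _
  · have hc1 : ∀ v w : Fin n → ℤ,
        Matrix.circulant v * Matrix.circulant w
          = Matrix.circulant w * Matrix.circulant v := fun v w =>
      Matrix.Fin.circulant_mul_comm v w
    have hc2 : ∀ (v w : Fin n → ℤ) (M : Matrix (Fin n) (Fin n) ℤ),
        Matrix.circulant v * (Matrix.circulant w * M)
          = Matrix.circulant w * (Matrix.circulant v * M) := fun v w M => by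
      rw [← mul_assoc, hc1, mul_assoc]
    have hone : ((4 * n : ℕ) : ℤ) •
        (1 : Matrix ((Fin n ⊕ Fin n) ⊕ (Fin n ⊕ Fin n)) ((Fin n ⊕ Fin n) ⊕ (Fin n ⊕ Fin n)) ℤ)
        = Matrix.fromBlocks
            (Matrix.fromBlocks (((4 * n : ℕ) : ℤ) • 1) 0 0 (((4 * n : ℕ) : ℤ) • 1)) 0 0
            (Matrix.fromBlocks (((4 * n : ℕ) : ℤ) • 1) 0 0 (((4 * n : ℕ) : ℤ) • 1)) := by
      rw [← Matrix.fromBlocks_one (l := Fin n ⊕ Fin n) (m := Fin n ⊕ Fin n),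
        ← Matrix.fromBlocks_one (l := Fin n) (m := Fin n)]
      simp only [Matrix.fromBlocks_smul, smul_zero]
    rw [hone]
    have hsum' := hsum
    simp only [Fin.transpose_circulant] at hsum'
    simp only [Matrix.fromBlocks_transpose, Matrix.fromBlocks_multiply,
      Matrix.transpose_neg, Matrix.transpose_mul, Matrix.transpose_transpose,
      gs_Rsymm hR, Fin.transpose_circulant,
      Matrix.neg_mul, Matrix.mul_neg, neg_neg, mul_assoc,
      gs_RC hR, gs_RC2 hR, gs_RR2 hR, gs_RR hR, one_mul, mul_one]
    rw [Matrix.fromBlocks_inj]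
    refine ⟨?_, ?_, ?_, ?_⟩ <;> rw [Matrix.fromBlocks_add] <;>
      (first
        | rw [Matrix.fromBlocks_inj]
        | rw [← Matrix.fromBlocks_zero, Matrix.fromBlocks_inj]) <;>
      refine ⟨?_, ?_, ?_, ?_⟩ <;>
      (try simp only [hc1, hc2, neg_neg, add_zero, zero_add]) <;>
      try abel
    all_goals rw [← hsum']
    all_goals abel
end

section
/- Let n ≥ 1 and let A₀, A₁, A₂, A₃ be n×n circulant matrices with entries in {+1, −1} satisfying A₀A₀ᵀ + A₁A₁ᵀ + A₂A₂ᵀ + A₃A₃ᵀ = 4n·I_n, and suppose in addition that A₀ + A₀ᵀ = 2·I_n. Let R be the n×n back-diagonal permutation matrix. Then the 4n×4n Goethals–Seidel block matrix A = [[A₀, A₁R, A₂R, A₃R], [−A₁R, A₀, −A₃ᵀR, A₂ᵀR], [−A₂R, A₃ᵀR, A₀, −A₁ᵀR], [−A₃R, −A₂ᵀR, A₁ᵀR, A₀]] is a skew-Hadamard matrix of order 4n: A·Aᵀ = 4n·I_{4n}, all entries of A are ±1, and A − I_{4n} is skew-symmetric. -/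
open Matrix

theorem stmt_8 (n : ℕ) (hn : 1 ≤ n)
    (A₀ A₁ A₂ A₃ : Matrix (Fin n) (Fin n) ℤ)
    (hc₀ : ∃ v, A₀ = Matrix.circulant v) (hc₁ : ∃ v, A₁ = Matrix.circulant v)
    (hc₂ : ∃ v, A₂ = Matrix.circulant v) (hc₃ : ∃ v, A₃ = Matrix.circulant v)
    (hpm : ∀ B ∈ [A₀, A₁, A₂, A₃], ∀ i j, B i j = 1 ∨ B i j = -1)
    (hsum : A₀ * A₀ᵀ + A₁ * A₁ᵀ + A₂ * A₂ᵀ + A₃ * A₃ᵀ = ((4 * n : ℕ) : ℤ) • 1)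
    (hskew : A₀ + A₀ᵀ = (2 : ℤ) • 1)
    (R : Matrix (Fin n) (Fin n) ℤ)
    (hR : ∀ i j : Fin n, R i j = if (i : ℕ) + (j : ℕ) = n - 1 then 1 else 0)
    (A : Matrix ((Fin n ⊕ Fin n) ⊕ (Fin n ⊕ Fin n)) ((Fin n ⊕ Fin n) ⊕ (Fin n ⊕ Fin n)) ℤ)
    (hA : A = Matrix.fromBlocks
      (Matrix.fromBlocks A₀ (A₁ * R) (-(A₁ * R)) A₀)
      (Matrix.fromBlocks (A₂ * R) (A₃ * R) (-(A₃ᵀ * R)) (A₂ᵀ * R))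
      (Matrix.fromBlocks (-(A₂ * R)) (A₃ᵀ * R) (-(A₃ * R)) (-(A₂ᵀ * R)))
      (Matrix.fromBlocks A₀ (-(A₁ᵀ * R)) (A₁ᵀ * R) A₀)) :
    A * Aᵀ = ((4 * n : ℕ) : ℤ) • 1 ∧ (∀ i j, A i j = 1 ∨ A i j = -1) ∧
      (A - 1)ᵀ = -(A - 1) := by
  haveI : NeZero n := ⟨by omega⟩
  set rev : Fin n → Fin n := fun i => ⟨n - 1 - i, by omega⟩ with hrev
  have mulR : ∀ (M : Matrix (Fin n) (Fin n) ℤ) i j, (M * R) i j = M i (rev j) := by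
    intro M i j
    rw [Matrix.mul_apply]
    rw [Finset.sum_eq_single (rev j)]
    · rw [hR]; simp [hrev]; omega
    · intro k _ hk
      rw [hR]
      have : ¬ ((k : ℕ) + (j : ℕ) = n - 1) := by
        intro h; apply hk; apply Fin.ext; simp [hrev]; omega
      simp [this]
    · simp
  have Rmul : ∀ (M : Matrix (Fin n) (Fin n) ℤ) i j, (R * M) i j = M (rev i) j := by
    intro M i j
    rw [Matrix.mul_apply]
    rw [Finset.sum_eq_single (rev i)]
    · rw [hR]; simp [hrev]; omega
    · intro k _ hk
      rw [hR]
      have : ¬ ((i : ℕ) + (k : ℕ) = n - 1) := by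
        intro h; apply hk; apply Fin.ext; simp [hrev]; omega
      simp [this]
    · simp
  have hRT : Rᵀ = R := by
    ext i j; rw [Matrix.transpose_apply, hR, hR]
    simp only [add_comm]
  have hRR : R * R = 1 := by
    ext i j
    rw [mulR, hR, Matrix.one_apply]
    rcases eq_or_ne i j with h | h
    · subst h; simp [hrev]; omega
    · have : ¬ ((i:ℕ) + ((rev j):ℕ) = n - 1) := by
        intro hc; apply h; apply Fin.ext; simp [hrev] at hc ⊢; omega
      simp [this, h]
  have hRRl : ∀ C : Matrix (Fin n) (Fin n) ℤ, R * (R * C) = C := by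
    intro C; rw [← mul_assoc, hRR, one_mul]
  have swap : ∀ B : Matrix (Fin n) (Fin n) ℤ, (∃ v, B = circulant v) → R * Bᵀ = B * R := by
    rintro B ⟨v, rfl⟩
    ext i j
    rw [Rmul, mulR, Matrix.transpose_apply, Matrix.circulant_apply, Matrix.circulant_apply]
    congr 1
    apply Fin.ext
    simp only [Fin.sub_def, hrev]
    have := i.isLt; have := j.isLt
    congr 1
    omega
  have hct : ∀ B : Matrix (Fin n) (Fin n) ℤ, (∃ v, B = circulant v) →
      (∃ v, Bᵀ = circulant v) := by
    rintro B ⟨v, rfl⟩; exact ⟨_, Matrix.Fin.transpose_circulant v⟩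
  have comm : ∀ B C : Matrix (Fin n) (Fin n) ℤ, (∃ v, B = circulant v) →
      (∃ v, C = circulant v) → B * C = C * B := by
    rintro B C ⟨v, rfl⟩ ⟨w, rfl⟩; exact Matrix.Fin.circulant_mul_comm v w
  have swap' : ∀ B : Matrix (Fin n) (Fin n) ℤ, (∃ v, B = circulant v) → R * B = Bᵀ * R := by
    intro B hB
    have := swap Bᵀ (hct B hB); rwa [Matrix.transpose_transpose] at this
  have r0t : R * A₀ᵀ = A₀ * R := swap A₀ hc₀
  have r1t : R * A₁ᵀ = A₁ * R := swap A₁ hc₁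
  have r2t : R * A₂ᵀ = A₂ * R := swap A₂ hc₂
  have r3t : R * A₃ᵀ = A₃ * R := swap A₃ hc₃
  have r0 : R * A₀ = A₀ᵀ * R := swap' A₀ hc₀
  have r1 : R * A₁ = A₁ᵀ * R := swap' A₁ hc₁
  have r2 : R * A₂ = A₂ᵀ * R := swap' A₂ hc₂
  have r3 : R * A₃ = A₃ᵀ * R := swap' A₃ hc₃
  have commR : ∀ B C : Matrix (Fin n) (Fin n) ℤ, (∃ v, B = circulant v) →
      (∃ v, C = circulant v) → B * (C * R) = C * (B * R) := by
    intro B C hB hC; rw [← mul_assoc, comm B C hB hC, mul_assoc]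
  have t₀ : ∃ v, A₀ᵀ = Matrix.circulant v := hct A₀ hc₀
  have t₁ : ∃ v, A₁ᵀ = Matrix.circulant v := hct A₁ hc₁
  have t₂ : ∃ v, A₂ᵀ = Matrix.circulant v := hct A₂ hc₂
  have t₃ : ∃ v, A₃ᵀ = Matrix.circulant v := hct A₃ hc₃
  have cm0 : A₁ * A₀ = A₀ * A₁ := comm A₁ A₀ hc₁ hc₀
  have cr0 : A₁ * (A₀ * R) = A₀ * (A₁ * R) := commR A₁ A₀ hc₁ hc₀
  have cm1 : A₂ * A₀ = A₀ * A₂ := comm A₂ A₀ hc₂ hc₀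
  have cr1 : A₂ * (A₀ * R) = A₀ * (A₂ * R) := commR A₂ A₀ hc₂ hc₀
  have cm2 : A₂ * A₁ = A₁ * A₂ := comm A₂ A₁ hc₂ hc₁
  have cr2 : A₂ * (A₁ * R) = A₁ * (A₂ * R) := commR A₂ A₁ hc₂ hc₁
  have cm3 : A₃ * A₀ = A₀ * A₃ := comm A₃ A₀ hc₃ hc₀
  have cr3 : A₃ * (A₀ * R) = A₀ * (A₃ * R) := commR A₃ A₀ hc₃ hc₀
  have cm4 : A₃ * A₁ = A₁ * A₃ := comm A₃ A₁ hc₃ hc₁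
  have cr4 : A₃ * (A₁ * R) = A₁ * (A₃ * R) := commR A₃ A₁ hc₃ hc₁
  have cm5 : A₃ * A₂ = A₂ * A₃ := comm A₃ A₂ hc₃ hc₂
  have cr5 : A₃ * (A₂ * R) = A₂ * (A₃ * R) := commR A₃ A₂ hc₃ hc₂
  have cm6 : A₀ᵀ * A₀ = A₀ * A₀ᵀ := comm A₀ᵀ A₀ t₀ hc₀
  have cr6 : A₀ᵀ * (A₀ * R) = A₀ * (A₀ᵀ * R) := commR A₀ᵀ A₀ t₀ hc₀
  have cm7 : A₀ᵀ * A₁ = A₁ * A₀ᵀ := comm A₀ᵀ A₁ t₀ hc₁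
  have cr7 : A₀ᵀ * (A₁ * R) = A₁ * (A₀ᵀ * R) := commR A₀ᵀ A₁ t₀ hc₁
  have cm8 : A₀ᵀ * A₂ = A₂ * A₀ᵀ := comm A₀ᵀ A₂ t₀ hc₂
  have cr8 : A₀ᵀ * (A₂ * R) = A₂ * (A₀ᵀ * R) := commR A₀ᵀ A₂ t₀ hc₂
  have cm9 : A₀ᵀ * A₃ = A₃ * A₀ᵀ := comm A₀ᵀ A₃ t₀ hc₃
  have cr9 : A₀ᵀ * (A₃ * R) = A₃ * (A₀ᵀ * R) := commR A₀ᵀ A₃ t₀ hc₃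
  have cm10 : A₁ᵀ * A₀ = A₀ * A₁ᵀ := comm A₁ᵀ A₀ t₁ hc₀
  have cr10 : A₁ᵀ * (A₀ * R) = A₀ * (A₁ᵀ * R) := commR A₁ᵀ A₀ t₁ hc₀
  have cm11 : A₁ᵀ * A₁ = A₁ * A₁ᵀ := comm A₁ᵀ A₁ t₁ hc₁
  have cr11 : A₁ᵀ * (A₁ * R) = A₁ * (A₁ᵀ * R) := commR A₁ᵀ A₁ t₁ hc₁
  have cm12 : A₁ᵀ * A₂ = A₂ * A₁ᵀ := comm A₁ᵀ A₂ t₁ hc₂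
  have cr12 : A₁ᵀ * (A₂ * R) = A₂ * (A₁ᵀ * R) := commR A₁ᵀ A₂ t₁ hc₂
  have cm13 : A₁ᵀ * A₃ = A₃ * A₁ᵀ := comm A₁ᵀ A₃ t₁ hc₃
  have cr13 : A₁ᵀ * (A₃ * R) = A₃ * (A₁ᵀ * R) := commR A₁ᵀ A₃ t₁ hc₃
  have cm14 : A₁ᵀ * A₀ᵀ = A₀ᵀ * A₁ᵀ := comm A₁ᵀ A₀ᵀ t₁ t₀
  have cr14 : A₁ᵀ * (A₀ᵀ * R) = A₀ᵀ * (A₁ᵀ * R) := commR A₁ᵀ A₀ᵀ t₁ t₀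
  have cm15 : A₂ᵀ * A₀ = A₀ * A₂ᵀ := comm A₂ᵀ A₀ t₂ hc₀
  have cr15 : A₂ᵀ * (A₀ * R) = A₀ * (A₂ᵀ * R) := commR A₂ᵀ A₀ t₂ hc₀
  have cm16 : A₂ᵀ * A₁ = A₁ * A₂ᵀ := comm A₂ᵀ A₁ t₂ hc₁
  have cr16 : A₂ᵀ * (A₁ * R) = A₁ * (A₂ᵀ * R) := commR A₂ᵀ A₁ t₂ hc₁
  have cm17 : A₂ᵀ * A₂ = A₂ * A₂ᵀ := comm A₂ᵀ A₂ t₂ hc₂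
  have cr17 : A₂ᵀ * (A₂ * R) = A₂ * (A₂ᵀ * R) := commR A₂ᵀ A₂ t₂ hc₂
  have cm18 : A₂ᵀ * A₃ = A₃ * A₂ᵀ := comm A₂ᵀ A₃ t₂ hc₃
  have cr18 : A₂ᵀ * (A₃ * R) = A₃ * (A₂ᵀ * R) := commR A₂ᵀ A₃ t₂ hc₃
  have cm19 : A₂ᵀ * A₀ᵀ = A₀ᵀ * A₂ᵀ := comm A₂ᵀ A₀ᵀ t₂ t₀
  have cr19 : A₂ᵀ * (A₀ᵀ * R) = A₀ᵀ * (A₂ᵀ * R) := commR A₂ᵀ A₀ᵀ t₂ t₀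
  have cm20 : A₂ᵀ * A₁ᵀ = A₁ᵀ * A₂ᵀ := comm A₂ᵀ A₁ᵀ t₂ t₁
  have cr20 : A₂ᵀ * (A₁ᵀ * R) = A₁ᵀ * (A₂ᵀ * R) := commR A₂ᵀ A₁ᵀ t₂ t₁
  have cm21 : A₃ᵀ * A₀ = A₀ * A₃ᵀ := comm A₃ᵀ A₀ t₃ hc₀
  have cr21 : A₃ᵀ * (A₀ * R) = A₀ * (A₃ᵀ * R) := commR A₃ᵀ A₀ t₃ hc₀
  have cm22 : A₃ᵀ * A₁ = A₁ * A₃ᵀ := comm A₃ᵀ A₁ t₃ hc₁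
  have cr22 : A₃ᵀ * (A₁ * R) = A₁ * (A₃ᵀ * R) := commR A₃ᵀ A₁ t₃ hc₁
  have cm23 : A₃ᵀ * A₂ = A₂ * A₃ᵀ := comm A₃ᵀ A₂ t₃ hc₂
  have cr23 : A₃ᵀ * (A₂ * R) = A₂ * (A₃ᵀ * R) := commR A₃ᵀ A₂ t₃ hc₂
  have cm24 : A₃ᵀ * A₃ = A₃ * A₃ᵀ := comm A₃ᵀ A₃ t₃ hc₃
  have cr24 : A₃ᵀ * (A₃ * R) = A₃ * (A₃ᵀ * R) := commR A₃ᵀ A₃ t₃ hc₃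
  have cm25 : A₃ᵀ * A₀ᵀ = A₀ᵀ * A₃ᵀ := comm A₃ᵀ A₀ᵀ t₃ t₀
  have cr25 : A₃ᵀ * (A₀ᵀ * R) = A₀ᵀ * (A₃ᵀ * R) := commR A₃ᵀ A₀ᵀ t₃ t₀
  have cm26 : A₃ᵀ * A₁ᵀ = A₁ᵀ * A₃ᵀ := comm A₃ᵀ A₁ᵀ t₃ t₁
  have cr26 : A₃ᵀ * (A₁ᵀ * R) = A₁ᵀ * (A₃ᵀ * R) := commR A₃ᵀ A₁ᵀ t₃ t₁
  have cm27 : A₃ᵀ * A₂ᵀ = A₂ᵀ * A₃ᵀ := comm A₃ᵀ A₂ᵀ t₃ t₂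
  have cr27 : A₃ᵀ * (A₂ᵀ * R) = A₂ᵀ * (A₃ᵀ * R) := commR A₃ᵀ A₂ᵀ t₃ t₂
  subst hA
  refine ⟨?_, ?_, ?_⟩
  · -- the product
    simp only [Matrix.fromBlocks_transpose, Matrix.fromBlocks_multiply, Matrix.fromBlocks_add,
      ← Matrix.fromBlocks_one, Matrix.fromBlocks_smul, smul_zero, ← Matrix.fromBlocks_zero]
    simp only [Matrix.fromBlocks_inj]
    refine ⟨⟨?_, ?_, ?_, ?_⟩, ⟨?_, ?_, ?_, ?_⟩, ⟨?_, ?_, ?_, ?_⟩, ⟨?_, ?_, ?_, ?_⟩⟩ <;>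
    · simp only [Matrix.transpose_neg, Matrix.transpose_mul, Matrix.transpose_transpose, hRT,
        Matrix.neg_mul, Matrix.mul_neg, neg_neg, mul_assoc, hRRl]
      try simp only [r0, r0t, r1, r1t, r2, r2t, r3, r3t]
      try rw [← hsum]
      try simp only [cm0, cr0, cm1, cr1, cm2, cr2, cm3, cr3, cm4, cr4, cm5, cr5, cm6, cr6, cm7, cr7, cm8, cr8, cm9, cr9, cm10, cr10, cm11, cr11, cm12, cr12, cm13, cr13, cm14, cr14, cm15, cr15, cm16, cr16, cm17, cr17, cm18, cr18, cm19, cr19, cm20, cr20, cm21, cr21, cm22, cr22, cm23, cr23, cm24, cr24, cm25, cr25, cm26, cr26, cm27, cr27]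
      abel
  · -- entries
    have p0 := hpm A₀ (by simp)
    have p1 := hpm A₁ (by simp)
    have p2 := hpm A₂ (by simp)
    have p3 := hpm A₃ (by simp)
    have pR : ∀ B : Matrix (Fin n) (Fin n) ℤ, (∀ i j, B i j = 1 ∨ B i j = -1) →
        ∀ i j, (B * R) i j = 1 ∨ (B * R) i j = -1 := by
      intro B h i j; rw [mulR]; exact h _ _
    have pT : ∀ B : Matrix (Fin n) (Fin n) ℤ, (∀ i j, B i j = 1 ∨ B i j = -1) →
        ∀ i j, Bᵀ i j = 1 ∨ Bᵀ i j = -1 := by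
      intro B h i j; exact h _ _
    have pN : ∀ B : Matrix (Fin n) (Fin n) ℤ, (∀ i j, B i j = 1 ∨ B i j = -1) →
        ∀ i j, (-B) i j = 1 ∨ (-B) i j = -1 := by
      intro B h i j
      rcases h i j with h' | h' <;> simp [h']
    intro i j
    rcases i with (i | i) | (i | i) <;> rcases j with (j | j) | (j | j) <;>
      simp only [Matrix.fromBlocks_apply₁₁, Matrix.fromBlocks_apply₁₂,
        Matrix.fromBlocks_apply₂₁, Matrix.fromBlocks_apply₂₂]
    · exact p0 i j
    · exact pR _ p1 i j
    · exact pR _ p2 i j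
    · exact pR _ p3 i j
    · exact pN _ (pR _ p1) i j
    · exact p0 i j
    · exact pN _ (pR _ (pT _ p3)) i j
    · exact pR _ (pT _ p2) i j
    · exact pN _ (pR _ p2) i j
    · exact pR _ (pT _ p3) i j
    · exact p0 i j
    · exact pN _ (pR _ (pT _ p1)) i j
    · exact pN _ (pR _ p3) i j
    · exact pN _ (pR _ (pT _ p2)) i j
    · exact pR _ (pT _ p1) i j
    · exact p0 i j
  · -- skew
    have key : (Matrix.fromBlocks
      (Matrix.fromBlocks A₀ (A₁ * R) (-(A₁ * R)) A₀)
      (Matrix.fromBlocks (A₂ * R) (A₃ * R) (-(A₃ᵀ * R)) (A₂ᵀ * R))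
      (Matrix.fromBlocks (-(A₂ * R)) (A₃ᵀ * R) (-(A₃ * R)) (-(A₂ᵀ * R)))
      (Matrix.fromBlocks A₀ (-(A₁ᵀ * R)) (A₁ᵀ * R) A₀)) +
      (Matrix.fromBlocks
      (Matrix.fromBlocks A₀ (A₁ * R) (-(A₁ * R)) A₀)
      (Matrix.fromBlocks (A₂ * R) (A₃ * R) (-(A₃ᵀ * R)) (A₂ᵀ * R))
      (Matrix.fromBlocks (-(A₂ * R)) (A₃ᵀ * R) (-(A₃ * R)) (-(A₂ᵀ * R)))
      (Matrix.fromBlocks A₀ (-(A₁ᵀ * R)) (A₁ᵀ * R) A₀))ᵀ = (2 : ℤ) • 1 := by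
      simp only [Matrix.fromBlocks_transpose, Matrix.fromBlocks_add,
        ← Matrix.fromBlocks_one, Matrix.fromBlocks_smul, smul_zero, ← Matrix.fromBlocks_zero]
      simp only [Matrix.fromBlocks_inj]
      refine ⟨⟨?_, ?_, ?_, ?_⟩, ⟨?_, ?_, ?_, ?_⟩, ⟨?_, ?_, ?_, ?_⟩, ⟨?_, ?_, ?_, ?_⟩⟩ <;>
      · try simp only [Matrix.transpose_neg, Matrix.transpose_mul, Matrix.transpose_transpose, hRT]
        try simp only [r0, r0t, r1, r1t, r2, r2t, r3, r3t]
        first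
        | exact hskew
        | abel
    rw [Matrix.transpose_sub, Matrix.transpose_one]
    have hT : (Matrix.fromBlocks
      (Matrix.fromBlocks A₀ (A₁ * R) (-(A₁ * R)) A₀)
      (Matrix.fromBlocks (A₂ * R) (A₃ * R) (-(A₃ᵀ * R)) (A₂ᵀ * R))
      (Matrix.fromBlocks (-(A₂ * R)) (A₃ᵀ * R) (-(A₃ * R)) (-(A₂ᵀ * R)))
      (Matrix.fromBlocks A₀ (-(A₁ᵀ * R)) (A₁ᵀ * R) A₀))ᵀ = (2 : ℤ) • 1 -
      (Matrix.fromBlocks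
      (Matrix.fromBlocks A₀ (A₁ * R) (-(A₁ * R)) A₀)
      (Matrix.fromBlocks (A₂ * R) (A₃ * R) (-(A₃ᵀ * R)) (A₂ᵀ * R))
      (Matrix.fromBlocks (-(A₂ * R)) (A₃ᵀ * R) (-(A₃ * R)) (-(A₂ᵀ * R)))
      (Matrix.fromBlocks A₀ (-(A₁ᵀ * R)) (A₁ᵀ * R) A₀)) := by
      rw [← key]; abel
    rw [hT, two_smul]; abel
end

section
/- In Z₉₇, let H = {1, 35, 61} and let the cosets α₀,…,α₃₁ of H in the multiplicative group of Z₉₇ satisfy α_{2i+1} = −α_{2i} for 0 ≤ i ≤ 15 with α₀ = H, α₂ = 2H, α₄ = 3H, α₆ = 4H, α₈ = 5H, α₁₀ = 6H, α₁₂ = 7H, α₁₄ = 9H, α₁₆ = 10H, α₁₈ = 12H, α₂₀ = 13H, α₂₂ = 15H, α₂₄ = 18H, α₂₆ = 20H, α₂₈ = 23H, α₃₀ = 26H. Define V_k = ⋃_{i ∈ K_k} α_i for k = 0,1,2,3, where K₀ = {0,3,4,7,9,11,12,14,17,19,20,22,24,27,28,30}, K₁ = {4,7,8,10,12,13,14,15,17,18,20,26,27},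 K₂ = {0,1,2,3,6,7,8,11,12,14,20,23,24,25,28,31}, K₃ = {1,2,4,7,8,9,10,12,13,19,21,23,24,25,26,27,31}. Then {V₀, V₁, V₂, V₃} is a 4-(97; 48,39,48,51; 89) supplementary difference set in Z₉₇: |V₀| = |V₂| = 48, |V₁| = 39, |V₃| = 51, and for every nonzero r ∈ Z₉₇ the total number of ordered pairs (i,j) with i,j ∈ V_k and i − j = r, summed over k = 0,1,2,3, equals 89. -/
/-- `H = {1, 35, 61}`, the subgroup of order 3 of the multiplicative group of `Z₉₇`
generated by `35`. -/
def H97 : Finset (ZMod 97) := {1, 35, 61}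

/-- The coset representatives `c₀, …, c₁₅` with `α_{2i} = cᵢ·H` and `α_{2i+1} = -cᵢ·H`. -/
def rep97 : Fin 16 → ZMod 97 := ![1, 2, 3, 4, 5, 6, 7, 9, 10, 12, 13, 15, 18, 20, 23, 26]

/-- The enumeration `α₀, …, α₃₁` of the cosets of `H` in the multiplicative group of `Z₉₇`:
`α_{2i} = cᵢ·H` and `α_{2i+1} = -α_{2i} = -cᵢ·H` for `0 ≤ i ≤ 15`, where
`c₀, …, c₁₅ = 1,2,3,4,5,6,7,9,10,12,13,15,18,20,23,26`. -/
def alpha97 (i : Fin 32) : Finset (ZMod 97) :=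
  if i.val % 2 = 0 then
    H97.image (fun h => rep97 ⟨i.val / 2, by have := i.isLt; omega⟩ * h)
  else
    H97.image (fun h => -(rep97 ⟨i.val / 2, by have := i.isLt; omega⟩ * h))

def W0 : Finset (ZMod 97) := {1,3,7,8,9,13,15,17,18,19,22,23,24,26,27,29,31,34,35,37,38,39,40,41,42,44,45,47,48,51,54,61,64,65,67,69,72,76,77,81,83,85,86,87,91,92,93,95}

def W1 : Finset (ZMod 97) := {3,5,6,7,8,9,12,13,14,16,17,20,21,24,32,33,38,39,41,46,47,51,53,54,56,58,64,67,69,73,75,76,77,78,86,87,88,90,93}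

def W2 : Finset (ZMod 97) := {1,2,4,5,7,9,13,14,17,18,22,23,24,25,27,29,31,35,36,39,43,45,47,48,49,50,51,54,55,57,60,61,62,63,64,66,67,70,71,72,78,79,81,82,91,93,95,96}

def W3 : Finset (ZMod 97) := {2,3,5,6,7,8,14,16,18,19,20,21,25,30,31,36,39,41,44,46,47,48,49,51,54,55,56,57,58,60,62,63,65,66,70,71,75,76,77,78,79,80,82,83,84,85,86,90,92,93,96}

set_option maxRecDepth 100000 in
set_option maxHeartbeats 8000000 in
lemma hV0 : ({0,3,4,7,9,11,12,14,17,19,20,22,24,27,28,30} : Finset (Fin 32)).biUnion alpha97 = W0 := by decide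

set_option maxRecDepth 100000 in
set_option maxHeartbeats 8000000 in
lemma hV1 : ({4,7,8,10,12,13,14,15,17,18,20,26,27} : Finset (Fin 32)).biUnion alpha97 = W1 := by decide

set_option maxRecDepth 100000 in
set_option maxHeartbeats 8000000 in
lemma hV2 : ({0,1,2,3,6,7,8,11,12,14,20,23,24,25,28,31} : Finset (Fin 32)).biUnion alpha97 = W2 := by decide

set_option maxRecDepth 100000 in
set_option maxHeartbeats 8000000 in
lemma hV3 : ({1,2,4,7,8,9,10,12,13,19,21,23,24,25,26,27,31} : Finset (Fin 32)).biUnion alpha97 = W3 := by decide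

set_option maxRecDepth 100000 in
set_option maxHeartbeats 8000000 in
lemma hc0 : W0.card = 48 := by decide

set_option maxRecDepth 100000 in
set_option maxHeartbeats 8000000 in
lemma hc1 : W1.card = 39 := by decide

set_option maxRecDepth 100000 in
set_option maxHeartbeats 8000000 in
lemma hc2 : W2.card = 48 := by decide

set_option maxRecDepth 100000 in
set_option maxHeartbeats 8000000 in
lemma hc3 : W3.card = 51 := by decide

def P97 (r : ZMod 97) : Prop := diffCount W0 r + diffCount W1 r + diffCount W2 r + diffCount W3 r = 89
instance : DecidablePred P97 := fun r => by unfold P97; infer_instance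

def S0 : Finset (ZMod 97) := {1,2,3,4,5,6,7,8,9,10,11,12}

set_option maxRecDepth 1000000 in
set_option maxHeartbeats 8000000 in
lemma hS0 : ∀ r ∈ S0, P97 r := by decide

def S1 : Finset (ZMod 97) := {13,14,15,16,17,18,19,20,21,22,23,24}

set_option maxRecDepth 1000000 in
set_option maxHeartbeats 8000000 in
lemma hS1 : ∀ r ∈ S1, P97 r := by decide

def S2 : Finset (ZMod 97) := {25,26,27,28,29,30,31,32,33,34,35,36}

set_option maxRecDepth 1000000 in
set_option maxHeartbeats 8000000 in
lemma hS2 : ∀ r ∈ S2, P97 r := by decide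

def S3 : Finset (ZMod 97) := {37,38,39,40,41,42,43,44,45,46,47,48}

set_option maxRecDepth 1000000 in
set_option maxHeartbeats 8000000 in
lemma hS3 : ∀ r ∈ S3, P97 r := by decide

def S4 : Finset (ZMod 97) := {49,50,51,52,53,54,55,56,57,58,59,60}

set_option maxRecDepth 1000000 in
set_option maxHeartbeats 8000000 in
lemma hS4 : ∀ r ∈ S4, P97 r := by decide

def S5 : Finset (ZMod 97) := {61,62,63,64,65,66,67,68,69,70,71,72}

set_option maxRecDepth 1000000 in
set_option maxHeartbeats 8000000 in
lemma hS5 : ∀ r ∈ S5, P97 r := by decide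

def S6 : Finset (ZMod 97) := {73,74,75,76,77,78,79,80,81,82,83,84}

set_option maxRecDepth 1000000 in
set_option maxHeartbeats 8000000 in
lemma hS6 : ∀ r ∈ S6, P97 r := by decide

def S7 : Finset (ZMod 97) := {85,86,87,88,89,90,91,92,93,94,95,96}

set_option maxRecDepth 1000000 in
set_option maxHeartbeats 8000000 in
lemma hS7 : ∀ r ∈ S7, P97 r := by decide

set_option maxRecDepth 100000 in
set_option maxHeartbeats 8000000 in
lemma cover97 : ∀ r : ZMod 97, r = 0 ∨ r ∈ S0 ∨ r ∈ S1 ∨ r ∈ S2 ∨ r ∈ S3 ∨ r ∈ S4 ∨ r ∈ S5 ∨ r ∈ S6 ∨ r ∈ S7 := by decide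


theorem stmt_17 :
    let V₀ : Finset (ZMod 97) :=
      ({0,3,4,7,9,11,12,14,17,19,20,22,24,27,28,30} : Finset (Fin 32)).biUnion alpha97
    let V₁ : Finset (ZMod 97) :=
      ({4,7,8,10,12,13,14,15,17,18,20,26,27} : Finset (Fin 32)).biUnion alpha97
    let V₂ : Finset (ZMod 97) :=
      ({0,1,2,3,6,7,8,11,12,14,20,23,24,25,28,31} : Finset (Fin 32)).biUnion alpha97
    let V₃ : Finset (ZMod 97) :=
      ({1,2,4,7,8,9,10,12,13,19,21,23,24,25,26,27,31} : Finset (Fin 32)).biUnion alpha97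
    V₀.card = 48 ∧ V₁.card = 39 ∧ V₂.card = 48 ∧ V₃.card = 51 ∧
      ∀ r : ZMod 97, r ≠ 0 →
        diffCount V₀ r + diffCount V₁ r + diffCount V₂ r + diffCount V₃ r = 89 := by
  intro V₀ V₁ V₂ V₃
  have e0 : V₀ = W0 := hV0
  have e1 : V₁ = W1 := hV1
  have e2 : V₂ = W2 := hV2
  have e3 : V₃ = W3 := hV3
  rw [e0, e1, e2, e3]
  refine ⟨hc0, hc1, hc2, hc3, ?_⟩
  intro r hr
  rcases cover97 r with h | h | h | h | h | h | h | h | h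
  · exact absurd h hr
  · exact hS0 r h
  · exact hS1 r h
  · exact hS2 r h
  · exact hS3 r h
  · exact hS4 r h
  · exact hS5 r h
  · exact hS6 r h
  · exact hS7 r h
end

section
/- In Z₉₇, with H = {1, 35, 61} and the cosets α₀,…,α₃₁ of H enumerated so that α_{2i+1} = −α_{2i} for 0 ≤ i ≤ 15 and α₀ = H, α₂ = 2H, α₄ = 3H, α₆ = 4H, α₈ = 5H, α₁₀ = 6H, α₁₂ = 7H, α₁₄ = 9H, α₁₆ = 10H, α₁₈ = 12H, α₂₀ = 13H, α₂₂ = 15H, α₂₄ = 18H, α₂₆ = 20H, α₂₈ = 23H, α₃₀ = 26H, let U₁ = ⋃_{i ∈ J₁} α_i with J₁ = {1,2,6,7,8,9,10,11,12,13,23,27,29} and V₁ = ⋃_{i ∈ K₁} α_i with K₁ = {4,7,8,10,12,13,14,15,17,18,20,26,27}. Then U₁ and V₁ are not equivalent: there exist no unit u of Z₉₇ and no element t of Z₉₇ such that V₁ = {u·x + t : x ∈ U₁}. -/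
def lU : List ℕ := [2,4,5,6,7,14,16,19,22,25,36,39,41,43,46,47,50,51,52,54,55,57,58,62,68,70,74,75,76,77,78,81,82,83,90,91,92,93,96]
def lV : List ℕ := [3,5,6,7,8,9,12,13,14,16,17,20,21,24,32,33,38,39,41,46,47,51,53,54,56,58,64,67,69,73,75,76,77,78,86,87,88,90,93]
def Ufin : Finset (ZMod 97) := (lU.map (fun n : ℕ => (n : ZMod 97))).toFinset
def Vfin : Finset (ZMod 97) := (lV.map (fun n : ℕ => (n : ZMod 97))).toFinset

def chk : Bool := (List.range 96).all fun u' =>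
  lV.all fun v => lU.any fun x => !(lV.contains (((u'+1)*x+((v + 2*(97-(u'+1)))%97))%97))

set_option maxHeartbeats 80000000 in
set_option maxRecDepth 10000000 in
lemma keyB : chk = true := rfl

set_option maxRecDepth 100000 in
lemma hU : ({1,2,6,7,8,9,10,11,12,13,23,27,29} : Finset (Fin 32)).biUnion alpha97 = Ufin := by decide
set_option maxRecDepth 100000 in
lemma hV : ({4,7,8,10,12,13,14,15,17,18,20,26,27} : Finset (Fin 32)).biUnion alpha97 = Vfin := by decide

lemma lV_lt : ∀ a ∈ lV, a < 97 := by decide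

lemma memV_val (z : ZMod 97) (hz : z ∈ Vfin) : z.val ∈ lV := by
  simp only [Vfin, List.mem_toFinset, List.mem_map] at hz
  obtain ⟨a, ha, rfl⟩ := hz
  rwa [ZMod.val_cast_of_lt (lV_lt a ha)]

lemma memU_cast (x : ℕ) (hx : x ∈ lU) : (x : ZMod 97) ∈ Ufin := by
  simp only [Ufin, List.mem_toFinset, List.mem_map]
  exact ⟨x, hx, rfl⟩

lemma key (u : ZMod 97) (hu : u ≠ 0) (t : ZMod 97) (h2 : u * 2 + t ∈ Vfin) :
    ∃ X ∈ Ufin, u * X + t ∉ Vfin := by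
  have h1 := keyB
  unfold chk at h1
  simp only [List.all_eq_true, List.any_eq_true, List.mem_range, Bool.not_eq_true'] at h1
  haveI : NeZero (97 : ℕ) := ⟨by norm_num⟩
  have hval : u.val < 97 := u.val_lt
  have hvne : u.val ≠ 0 := by simpa [ZMod.val_eq_zero] using hu
  have h1u : u.val - 1 < 96 := by omega
  have hvV : (u * 2 + t).val ∈ lV := memV_val _ h2
  obtain ⟨x, hx, hy⟩ := h1 (u.val - 1) (by simpa using h1u) _ hvV
  have hu1 : u.val - 1 + 1 = u.val := by omega
  rw [hu1] at hy
  replace hy : (u.val * x + ((u * 2 + t).val + 2 * (97 - u.val))) % 97 ∉ lV := by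
    simpa using hy
  have hcastu : ((u.val : ℕ) : ZMod 97) = u := by simp [ZMod.natCast_val, ZMod.cast_id]
  have hcastv : (((u * 2 + t).val : ℕ) : ZMod 97) = u * 2 + t := by
    simp [ZMod.natCast_val, ZMod.cast_id]
  refine ⟨(x : ZMod 97), memU_cast x hx, fun hmem => ?_⟩
  have hmv : (u * (x : ZMod 97) + t).val ∈ lV := memV_val _ hmem
  have heq : u * (x : ZMod 97) + t
      = (((u.val * x + ((u * 2 + t).val + 2 * (97 - u.val))) % 97 : ℕ) : ZMod 97) := by
    rw [ZMod.natCast_mod]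
    push_cast [Nat.cast_sub (le_of_lt hval)]
    rw [hcastu, hcastv]
    have h97 : ((97 : ℕ) : ZMod 97) = 0 := by decide
    push_cast at h97
    rw [h97]
    ring
  rw [heq, ZMod.val_cast_of_lt (Nat.mod_lt _ (by norm_num))] at hmv
  exact hy hmv

lemma main : ¬ ∃ (u : (ZMod 97)ˣ) (t : ZMod 97),
    ({4,7,8,10,12,13,14,15,17,18,20,26,27} : Finset (Fin 32)).biUnion alpha97 =
    (({1,2,6,7,8,9,10,11,12,13,23,27,29} : Finset (Fin 32)).biUnion alpha97).image
      (fun x => (u : ZMod 97) * x + t) := by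
  haveI : Fact (Nat.Prime 97) := ⟨by norm_num⟩
  rintro ⟨u, t, h⟩
  rw [hU, hV] at h
  have h2mem : ((2 : ℕ) : ZMod 97) ∈ Ufin := memU_cast 2 (by norm_num [lU])
  have h2 : (u : ZMod 97) * 2 + t ∈ Vfin := by
    rw [h]
    have := Finset.mem_image_of_mem (fun x => (u : ZMod 97) * x + t) h2mem
    simpa using this
  obtain ⟨X, hXU, hXV⟩ := key (u : ZMod 97) u.ne_zero t h2
  exact hXV (h ▸ Finset.mem_image_of_mem _ hXU)

theorem stmt_18 :
    let U₁ : Finset (ZMod 97) :=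
      ({1,2,6,7,8,9,10,11,12,13,23,27,29} : Finset (Fin 32)).biUnion alpha97
    let V₁ : Finset (ZMod 97) :=
      ({4,7,8,10,12,13,14,15,17,18,20,26,27} : Finset (Fin 32)).biUnion alpha97
    ¬ ∃ (u : (ZMod 97)ˣ) (t : ZMod 97),
        V₁ = U₁.image (fun x => (u : ZMod 97) * x + t) := by
  exact main
end
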